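/- Let G be a profinite group with an open normal subgroup Z topologically isomorphic to Z_p for some prime p, and let H be a non-isolated point of S(G). Then H is solitary in G if and only if H ≤ C_G(Z), the centralizer of Z in G; moreover there are only finitely many such solitary subgroups. -/

import Mathlib

open Pointwise

/-- The Vietoris topology on the subsets of `X`, generated by the sets
`{F | F ⊆ U}` and `{F | F ∩ U ≠ ∅}` for `U` open. Restricted to (nonempty) compact
subsets this is the usual Vietoris hyperspace topology. -/
def vietorisTop (X : Type*) [TopologicalSpace X] : TopologicalSpace (Set X) :=
  TopologicalSpace.generateFrom
    ({t | ∃ U : Set X, IsOpen U ∧ t = {F : Set X | F ⊆ U}} ∪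
     {t | ∃ U : Set X, IsOpen U ∧ t = {F : Set X | (F ∩ U).Nonempty}})

/-- `SG G` is the space of closed subgroups of `G`, topologized as a subspace of the
hyperspace of `G` with the Vietoris topology. -/
def SG (G : Type*) [Group G] [TopologicalSpace G] : Type _ :=
  {K : Subgroup G // IsClosed (K : Set G)}

instance SG.topologicalSpace (G : Type*) [Group G] [TopologicalSpace G] :
    TopologicalSpace (SG G) :=
  TopologicalSpace.induced (fun K => (K.1 : Set G)) (vietorisTop G)

/-- The derived set (set of non-isolated points) of a topological space. -/
def derivedPts (Y : Type*) [TopologicalSpace Y] : Set Y :=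
  {y | y ∈ closure ({y}ᶜ : Set Y)}

/-- A closed subgroup `H` of `G` is solitary if it is a non-isolated point of the space
`S(G)` of closed subgroups which is isolated in the derived set `S(G)′`. -/
def Solitary {G : Type*} [Group G] [TopologicalSpace G] (H : SG G) : Prop :=
  H ∈ derivedPts (SG G) ∧
    ∃ U : Set (SG G), IsOpen U ∧ U ∩ derivedPts (SG G) = {H}

/-!
The subgroups `Z_n ≤ Z` corresponding to `p ^ n ℤ_p` are open, normal in `G`, and form a basis of
neighbourhoods of `1`. For an open normal subgroup `N`, the closed subgroups `K` with
`K ⊔ N = H ⊔ N` form a neighbourhood of `H` in `S(G)`, and these neighbourhoods form a basis as `N`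
shrinks to `1`.

A closed subgroup meeting `Z` nontrivially contains some `Z_m`, because closed additive subgroups
of `ℤ_p` are ideals; so it is open, and open subgroups are isolated points of `S(G)`. If instead
`H ∩ Z = 1`, the subgroups `H ⊔ Z_n` converge to `H`. Hence `S(G)′` consists of the closed
subgroups meeting `Z` trivially. If such an `H` does not commute with some `z ∈ Z`, then neither
does it commute with `z ^ p ^ n ∈ Z_n`, and conjugating `H` by these elements produces points of
`S(G)′` other than `H` converging to `H`. If `H` centralizes `Z`, torsion-freeness of `Z` makes
`H` the only `K ∈ S(G)′` with `K ⊔ Z = H ⊔ Z`. Finally, every solitary subgroup consists of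
elements of `C_G(Z)` whose `[G : Z]`-th power is `1`, and there are only finitely many such
elements: at most one in each coset of `Z`.
-/

open Topology

namespace PadicInt

variable {p : ℕ} [Fact p.Prime]

theorem hasBasis_nhds_zero :
    (𝓝 (0 : ℤ_[p])).HasBasis (fun _ => True)
      fun n => (Ideal.span {(p : ℤ_[p]) ^ n} : Set ℤ_[p]) := by
  have hp : (1 : ℝ) < p := by exact_mod_cast (Fact.out : p.Prime).one_lt
  convert Metric.nhds_basis_closedBall_pow (x := (0 : ℤ_[p])) (inv_pos.2 (zero_lt_one.trans hp))
    (inv_lt_one_of_one_lt₀ hp) using 2 with n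
  ext x
  rw [SetLike.mem_coe, ← norm_le_pow_iff_mem_span_pow, mem_closedBall_zero_iff, zpow_neg,
    zpow_natCast, inv_pow]

theorem isOpen_span_pow (n : ℕ) : IsOpen (Ideal.span {(p : ℤ_[p]) ^ n} : Set ℤ_[p]) :=
  AddSubgroup.isOpen_of_mem_nhds (Ideal.span {(p : ℤ_[p]) ^ n}).toAddSubgroup
    (hasBasis_nhds_zero.mem_of_mem trivial)

theorem mul_mem_of_isClosed {A : AddSubgroup ℤ_[p]} (hA : IsClosed (A : Set ℤ_[p])) {x : ℤ_[p]}
    (hx : x ∈ A) (a : ℤ_[p]) : x * a ∈ A := by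
  refine denseRange_intCast.induction_on a (hA.preimage (continuous_const.mul continuous_id))
    fun k => ?_
  rw [mul_comm, ← zsmul_eq_mul]
  exact A.zsmul_mem hx k

theorem exists_pow_dvd_and_not_pow_succ_dvd {x : ℤ_[p]} (hx : x ≠ 0) :
    ∃ m : ℕ, (p : ℤ_[p]) ^ m ∣ x ∧ ¬(p : ℤ_[p]) ^ (m + 1) ∣ x :=
  ⟨x.valuation, by
    simp [← Ideal.mem_span_singleton, mem_span_pow_iff_le_valuation x hx]⟩

theorem dvd_of_pow_dvd_of_not_pow_succ_dvd {m : ℕ} {x y : ℤ_[p]} (hx : (p : ℤ_[p]) ^ m ∣ x)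
    (hx' : ¬(p : ℤ_[p]) ^ (m + 1) ∣ x) (hy : (p : ℤ_[p]) ^ m ∣ y) : x ∣ y := by
  obtain ⟨c, rfl⟩ := hx
  obtain ⟨d, rfl⟩ := hy
  have hc : IsUnit c := by
    by_contra hc
    have hpc : (p : ℤ_[p]) ∣ c := (norm_lt_one_iff_dvd c).1 (mem_nonunits.1 hc)
    exact hx' (pow_succ (p : ℤ_[p]) m ▸ mul_dvd_mul_left _ hpc)
  exact mul_dvd_mul_left _ hc.dvd

end PadicInt

namespace Subgroup

variable {G : Type*} [Group G] {Z : Subgroup G}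

theorem eq_one_of_pow_eq_one [IsMulTorsionFree Z] {w : G} (hw : w ∈ Z) {n : ℕ} (hn : n ≠ 0)
    (h : w ^ n = 1) : w = 1 := by
  lift w to Z using hw
  exact_mod_cast (pow_eq_one_iff_left hn).1 (by exact_mod_cast h : w ^ n = 1)

theorem commute_of_commute_pow [Z.Normal] [IsMulTorsionFree Z] {g z : G} (hz : z ∈ Z) {n : ℕ}
    (hn : n ≠ 0) (h : Commute g (z ^ n)) : Commute g z := by
  have hconj : g * z * g⁻¹ ∈ Z := ‹Z.Normal›.conj_mem z hz g
  have hpow : (⟨g * z * g⁻¹, hconj⟩ : Z) ^ n = ⟨z, hz⟩ ^ n := by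
    ext
    simp [conj_pow, h.eq]
  have := congrArg Subtype.val (pow_left_injective hn hpow)
  exact mul_inv_eq_iff_eq_mul.1 this

theorem commute_of_conj_mem [Z.Normal] {H : Subgroup G} (hHZ : Disjoint H Z) {h z : G}
    (hh : h ∈ H) (hz : z ∈ Z) (hzh : z * h * z⁻¹ ∈ H) : Commute z h := by
  have hZ : z * h * z⁻¹ * h⁻¹ ∈ Z := by
    rw [mul_assoc, mul_assoc, ← mul_assoc h]
    exact mul_mem hz (‹Z.Normal›.conj_mem _ (inv_mem hz) h)
  have := disjoint_def.1 hHZ (mul_mem hzh (inv_mem hh)) hZ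
  exact mul_inv_eq_iff_eq_mul.1 (mul_inv_eq_one.1 this)

theorem disjoint_conjAct_smul [Z.Normal] {H : Subgroup G} (hHZ : Disjoint H Z) (g : G) :
    Disjoint (ConjAct.toConjAct g • H) Z := by
  rw [disjoint_iff, ← ‹Z.Normal›.conjAct (ConjAct.toConjAct g), ← smul_inf,
    disjoint_iff.1 hHZ, smul_bot]

theorem conjAct_smul_sup_eq {N : Subgroup G} [N.Normal] {z : G} (hz : z ∈ N) (H : Subgroup G) :
    ConjAct.toConjAct z • H ⊔ N = H ⊔ N := by
  rw [← ‹N.Normal›.conjAct (ConjAct.toConjAct z), ← smul_sup, ‹N.Normal›.conjAct]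
  exact conjAct_pointwise_smul_eq_self (le_normalizer (mem_sup_right hz))

theorem eq_of_sup_eq_of_le_centralizer [Z.Normal] [Z.FiniteIndex] [IsMulTorsionFree Z]
    {H K : Subgroup G} (hHc : H ≤ centralizer (Z : Set G)) (hHZ : Disjoint H Z)
    (hKZ : Disjoint K Z) (hKH : K ⊔ Z = H ⊔ Z) : K = H := by
  have hm : Z.index ≠ 0 := FiniteIndex.index_ne_zero
  have hKH' : K ≤ H := by
    intro k hk
    obtain ⟨h, hh, w, hw, rfl⟩ := mem_sup_of_normal_right.1 (hKH ▸ mem_sup_left hk)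
    have hh1 : h ^ Z.index = 1 := disjoint_def.1 hHZ (pow_mem hh _) (Z.pow_index_mem h)
    have hk1 : (h * w) ^ Z.index = 1 := disjoint_def.1 hKZ (pow_mem hk _) (Z.pow_index_mem _)
    rw [Commute.mul_pow (mem_centralizer_iff.1 (hHc hh) w hw).symm, hh1, one_mul] at hk1
    rwa [eq_one_of_pow_eq_one hw hm hk1, mul_one]
  refine le_antisymm hKH' fun h hh => ?_
  obtain ⟨k, hk, w, hw, rfl⟩ := mem_sup_of_normal_right.1 (hKH.symm ▸ mem_sup_left hh)
  have hwH : w ∈ H := by simpa using mul_mem (inv_mem (hKH' hk)) hh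
  rwa [disjoint_def.1 hHZ hwH hw, mul_one]

theorem finite_setOf_mem_centralizer_pow_index_eq_one [Z.FiniteIndex] [IsMulTorsionFree Z] :
    {t : G | t ∈ centralizer (Z : Set G) ∧ t ^ Z.index = 1}.Finite := by
  refine Set.Finite.of_finite_image (f := (QuotientGroup.mk : G → G ⧸ Z)) (Set.toFinite _) ?_
  rintro t ⟨ht, ht1⟩ t' ⟨-, ht'1⟩ htt'
  obtain ⟨w, hw, rfl⟩ : ∃ w ∈ Z, t * w = t' := ⟨t⁻¹ * t', QuotientGroup.eq.1 htt', by group⟩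
  rw [Commute.mul_pow (mem_centralizer_iff.1 ht w hw).symm, ht1, one_mul] at ht'1
  rw [eq_one_of_pow_eq_one hw FiniteIndex.index_ne_zero ht'1, mul_one]

theorem finiteIndex_of_isOpen [TopologicalSpace G] [IsTopologicalGroup G] [CompactSpace G]
    (hZ : IsOpen (Z : Set G)) : Z.FiniteIndex :=
  have := Z.quotient_finite_of_isOpen hZ
  finiteIndex_of_finite_quotient

end Subgroup

def Homeomorph.toContinuousMulEquivMultiplicative {M A : Type*} [Mul M] [Add A]
    [TopologicalSpace M] [TopologicalSpace A] (e : M ≃ₜ A) (he : ∀ a b, e (a * b) = e a + e b) :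
    M ≃ₜ* Multiplicative A where
  toEquiv := e.toEquiv.trans Multiplicative.ofAdd
  map_mul' := he
  continuous_toFun := continuous_ofAdd.comp e.continuous
  continuous_invFun := e.symm.continuous.comp continuous_toAdd

theorem mem_derivedPts_iff {Y : Type*} [TopologicalSpace Y] {y : Y} :
    y ∈ derivedPts Y ↔ ∀ O ∈ 𝓝 y, ∃ z ∈ O, z ≠ y := by
  simp only [derivedPts, Set.mem_ofPred_eq, mem_closure_iff_nhds, Set.Nonempty, Set.mem_inter_iff,
    Set.mem_compl_singleton_iff]

namespace SG

variable {G : Type*} [Group G] [TopologicalSpace G]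

theorem isOpen_setOf_subset {U : Set G} (hU : IsOpen U) :
    IsOpen {K : SG G | (K.1 : Set G) ⊆ U} :=
  (isOpen_induced_iff (t := vietorisTop G)).2 ⟨_, .basic _ (.inl ⟨U, hU, rfl⟩), rfl⟩

theorem isOpen_setOf_inter_nonempty {U : Set G} (hU : IsOpen U) :
    IsOpen {K : SG G | ((K.1 : Set G) ∩ U).Nonempty} :=
  (isOpen_induced_iff (t := vietorisTop G)).2 ⟨_, .basic _ (.inr ⟨U, hU, rfl⟩), rfl⟩

theorem isClopen_setOf_inter_nonempty {U : Set G} (hU : IsClopen U) :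
    IsClopen {K : SG G | ((K.1 : Set G) ∩ U).Nonempty} := by
  refine ⟨⟨?_⟩, isOpen_setOf_inter_nonempty hU.isOpen⟩
  convert isOpen_setOf_subset hU.compl.isOpen using 1
  ext K
  simp only [Set.mem_compl_iff, Set.mem_ofPred_eq, Set.not_nonempty_iff_eq_empty,
    ← Set.disjoint_iff_inter_eq_empty, Set.subset_compl_iff_disjoint_right]

variable [IsTopologicalGroup G] [CompactSpace G]

theorem isOpen_setOf_sup_eq (H : Subgroup G) {N : Subgroup G} [N.Normal]
    (hN : IsOpen (N : Set G)) : IsOpen {K : SG G | K.1 ⊔ N = H ⊔ N} := by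
  -- `K ⊔ N = H ⊔ N` says that `K` and `H` meet the same cosets of `N`, and these are finitely many
  -- clopen sets.
  have : DiscreteTopology (G ⧸ N) := QuotientGroup.discreteTopology hN
  have : Finite (G ⧸ N) := finite_of_compact_of_discrete
  have hfiber (q : G ⧸ N) : IsClopen {K : SG G | q ∈ K.1.map (QuotientGroup.mk' N)} := by
    convert isClopen_setOf_inter_nonempty
      ((isClopen_discrete {q}).preimage (QuotientGroup.continuous_mk (N := N))) using 1
    ext K
    simp [Set.Nonempty]
  have hset : {K : SG G | K.1 ⊔ N = H ⊔ N} = ⋂ q : G ⧸ N,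
      {K : SG G | q ∈ K.1.map (QuotientGroup.mk' N) ↔ q ∈ H.map (QuotientGroup.mk' N)} := by
    ext K
    simp only [Set.mem_ofPred_eq, Set.mem_iInter, ← SetLike.ext_iff, Subgroup.map_eq_map_iff,
      QuotientGroup.ker_mk']
  rw [hset]
  refine isOpen_iInter_of_finite fun q => ?_
  by_cases hq : q ∈ H.map (QuotientGroup.mk' N)
  · simpa [hq] using (hfiber q).isOpen
  · convert (hfiber q).compl.isOpen using 1
    ext K
    simp [hq]

theorem exists_nhds_one_forall_sup_eq_subset {H : SG G} {O : Set (SG G)} (hO : O ∈ 𝓝 H) :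
    ∃ W ∈ 𝓝 (1 : G), ∀ (N : Subgroup G) [N.Normal], (N : Set G) ⊆ W →
      {K : SG G | K.1 ⊔ N = H.1 ⊔ N} ⊆ O := by
  obtain ⟨O', hO'O, hO'open, hHO'⟩ := mem_nhds_iff.1 hO
  obtain ⟨t, ht, rfl⟩ := (isOpen_induced_iff (t := vietorisTop G)).1 hO'open
  suffices ∀ t, TopologicalSpace.GenerateOpen _ t → (H.1 : Set G) ∈ t →
      ∃ W ∈ 𝓝 (1 : G), ∀ (N : Subgroup G) [N.Normal], (N : Set G) ⊆ W →
        ∀ K : SG G, K.1 ⊔ N = H.1 ⊔ N → (K.1 : Set G) ∈ t by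
    obtain ⟨W, hW, hWt⟩ := this t ht hHO'
    exact ⟨W, hW, fun N _ hNW K hK => hO'O (hWt N hNW K hK)⟩
  intro t ht
  induction ht with
  | basic s hs =>
    rcases hs with ⟨U, hU, rfl⟩ | ⟨U, hU, rfl⟩
    · intro hHU
      obtain ⟨W, hW, hWU⟩ := compact_open_separated_mul_right H.2.isCompact hU hHU
      refine ⟨W, hW, fun N _ hNW K hK => ?_⟩
      calc (K.1 : Set G) ⊆ (K.1 ⊔ N : Subgroup G) := le_sup_left (a := K.1)
        _ = H.1 * N := by rw [hK, Subgroup.mul_normal]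
        _ ⊆ H.1 * W := Set.mul_subset_mul_left hNW
        _ ⊆ U := hWU
    · rintro ⟨h, hhH, hhU⟩
      refine ⟨(fun w => h * w⁻¹) ⁻¹' U, ?_, fun N _ hNW K hK => ?_⟩
      · exact (continuous_const.mul continuous_inv).continuousAt.preimage_mem_nhds
          (by simpa using hU.mem_nhds hhU)
      · have hh : h ∈ K.1 ⊔ N := hK ▸ Subgroup.mem_sup_left hhH
        obtain ⟨k, hk, n, hn, rfl⟩ := Subgroup.mem_sup_of_normal_right.1 hh
        exact ⟨k, hk, by simpa using hNW hn⟩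
  | univ => exact fun _ => ⟨Set.univ, Filter.univ_mem, fun _ _ _ _ _ => trivial⟩
  | inter s₁ s₂ _ _ ih₁ ih₂ =>
    rintro ⟨hH₁, hH₂⟩
    obtain ⟨W₁, hW₁, h₁⟩ := ih₁ hH₁
    obtain ⟨W₂, hW₂, h₂⟩ := ih₂ hH₂
    exact ⟨W₁ ∩ W₂, Filter.inter_mem hW₁ hW₂, fun N _ hNW K hK =>
      ⟨h₁ N (hNW.trans Set.inter_subset_left) K hK, h₂ N (hNW.trans Set.inter_subset_right) K hK⟩⟩
  | sUnion S _ ih =>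
    rintro ⟨s, hs, hHs⟩
    obtain ⟨W, hW, hWs⟩ := ih s hs hHs
    exact ⟨W, hW, fun N _ hNW K hK => ⟨s, hs, hWs N hNW K hK⟩⟩

theorem mem_derivedPts_of_forall_exists_sup_eq {H : SG G}
    (h : ∀ W ∈ 𝓝 (1 : G), ∃ N : Subgroup G, N.Normal ∧ (N : Set G) ⊆ W ∧
      ∃ K : SG G, K.1 ⊔ N = H.1 ⊔ N ∧ K ≠ H) :
    H ∈ derivedPts (SG G) := by
  refine mem_derivedPts_iff.2 fun O hO => ?_
  obtain ⟨W, hW, hWO⟩ := exists_nhds_one_forall_sup_eq_subset hO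
  obtain ⟨N, hN, hNW, K, hK, hKH⟩ := h W hW
  exact ⟨K, hWO N hNW hK, hKH⟩

theorem notMem_derivedPts_of_forall_sup_eq {H : SG G} (N : Subgroup G) [N.Normal]
    (hN : IsOpen (N : Set G)) (h : ∀ K : SG G, K.1 ⊔ N = H.1 ⊔ N → K = H) :
    H ∉ derivedPts (SG G) := by
  rw [mem_derivedPts_iff]
  push Not
  exact ⟨_, (isOpen_setOf_sup_eq H.1 hN).mem_nhds rfl, h⟩

theorem solitary_of_forall_sup_eq {H : SG G} (hH : H ∈ derivedPts (SG G)) (N : Subgroup G)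
    [N.Normal] (hN : IsOpen (N : Set G))
    (h : ∀ K ∈ derivedPts (SG G), K.1 ⊔ N = H.1 ⊔ N → K = H) : Solitary H :=
  ⟨hH, _, isOpen_setOf_sup_eq H.1 hN,
    Set.eq_singleton_iff_unique_mem.2 ⟨⟨rfl, hH⟩, fun K hK => h K hK.2 hK.1⟩⟩

end SG

theorem Solitary.exists_nhds_one_forall_sup_eq {G : Type*} [Group G] [TopologicalSpace G]
    [IsTopologicalGroup G] [CompactSpace G] {H : SG G} (hH : Solitary H) :
    ∃ W ∈ 𝓝 (1 : G), ∀ (N : Subgroup G) [N.Normal], (N : Set G) ⊆ W →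
      ∀ K ∈ derivedPts (SG G), K.1 ⊔ N = H.1 ⊔ N → K = H := by
  obtain ⟨-, U, hU, hUH⟩ := hH
  have hHU : H ∈ U := (hUH.ge rfl).1
  obtain ⟨W, hW, hWU⟩ := SG.exists_nhds_one_forall_sup_eq_subset (hU.mem_nhds hHU)
  refine ⟨W, hW, fun N _ hNW K hKd hK => ?_⟩
  have : K ∈ U ∩ derivedPts (SG G) := ⟨hWU N hNW hK, hKd⟩
  rwa [hUH] at this

section PadicLevel

variable {G : Type*} [Group G] [TopologicalSpace G] {p : ℕ} [Fact p.Prime] {Z : Subgroup G}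
  (e : Z ≃ₜ* Multiplicative ℤ_[p])

/-- The subgroup `Z_n` of `G`. -/
noncomputable def padicLevel (n : ℕ) : Subgroup G :=
  ((Ideal.span {(p : ℤ_[p]) ^ n}).toAddSubgroup.toSubgroup.comap
    (e : Z →* Multiplicative ℤ_[p])).map Z.subtype

variable {e}

theorem coe_mem_padicLevel {n : ℕ} {z : Z} :
    (z : G) ∈ padicLevel e n ↔ (p : ℤ_[p]) ^ n ∣ (e z).toAdd := by
  simp [padicLevel, Ideal.mem_span_singleton]

theorem padicLevel_le (n : ℕ) : padicLevel e n ≤ Z :=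
  (Subgroup.map_le_range _ _).trans Z.range_subtype.le

theorem padicLevel_antitone : Antitone (padicLevel e) := by
  intro m n hmn g hg
  lift g to Z using padicLevel_le n hg
  exact coe_mem_padicLevel.2 ((pow_dvd_pow _ hmn).trans (coe_mem_padicLevel.1 hg))

theorem pow_mem_padicLevel {z : G} (hz : z ∈ Z) (n : ℕ) : z ^ p ^ n ∈ padicLevel e n := by
  lift z to Z using hz
  rw [← Subgroup.coe_pow, coe_mem_padicLevel, map_pow, toAdd_pow, nsmul_eq_mul]
  exact_mod_cast dvd_mul_right _ _

theorem exists_pow_eq_of_mem_padicLevel {n : ℕ} {g : G} (hg : g ∈ padicLevel e n) :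
    ∃ z ∈ Z, z ^ p ^ n = g := by
  lift g to Z using padicLevel_le n hg
  obtain ⟨c, hc⟩ := coe_mem_padicLevel.1 hg
  refine ⟨e.symm (.ofAdd c), Subtype.mem _, ?_⟩
  rw [← Subgroup.coe_pow, ← map_pow, ← ofAdd_nsmul, nsmul_eq_mul]
  push_cast
  rw [← hc, ofAdd_toAdd, ContinuousMulEquiv.symm_apply_apply]

theorem padicLevel_normal [Z.Normal] (n : ℕ) : (padicLevel e n).Normal where
  conj_mem g hg h := by
    obtain ⟨z, hz, rfl⟩ := exists_pow_eq_of_mem_padicLevel hg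
    rw [← conj_pow]
    exact pow_mem_padicLevel (‹Z.Normal›.conj_mem z hz h) n

theorem isOpen_padicLevel (hZ : IsOpen (Z : Set G)) (n : ℕ) :
    IsOpen (padicLevel e n : Set G) := by
  rw [padicLevel, Subgroup.coe_map, Subgroup.coe_comap]
  exact hZ.isOpenMap_subtype_val _
    (((PadicInt.isOpen_span_pow n).preimage continuous_toAdd).preimage e.continuous)

theorem exists_padicLevel_subset {W : Set G} (hW : W ∈ 𝓝 (1 : G)) :
    ∃ n, (padicLevel e n : Set G) ⊆ W := by
  have hcont : Continuous fun x : ℤ_[p] => (e.symm (.ofAdd x) : G) :=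
    continuous_subtype_val.comp (e.symm.continuous.comp continuous_ofAdd)
  have hW0 : (fun x : ℤ_[p] => (e.symm (.ofAdd x) : G)) ⁻¹' W ∈ 𝓝 0 :=
    hcont.continuousAt.preimage_mem_nhds (by simpa using hW)
  obtain ⟨n, -, hn⟩ := PadicInt.hasBasis_nhds_zero.mem_iff.1 hW0
  refine ⟨n, fun g hg => ?_⟩
  lift g to Z using padicLevel_le n hg
  have := hn (Ideal.mem_span_singleton.2 (coe_mem_padicLevel.1 hg))
  simpa using this

theorem exists_mem_padicLevel_notMem_succ (n : ℕ) :
    ∃ g ∈ padicLevel e n, g ∉ padicLevel e (n + 1) := by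
  refine ⟨e.symm (.ofAdd ((p : ℤ_[p]) ^ n)), ?_, ?_⟩ <;>
    simp only [coe_mem_padicLevel, ContinuousMulEquiv.apply_symm_apply, toAdd_ofAdd,
      pow_dvd_pow_iff PadicInt.prime_p.ne_zero PadicInt.prime_p.not_isUnit] <;> omega

theorem exists_mem_padicLevel_notMem_succ_of_ne_one {g : G} (hg : g ∈ Z) (hg1 : g ≠ 1) :
    ∃ m, g ∈ padicLevel e m ∧ g ∉ padicLevel e (m + 1) := by
  lift g to Z using hg
  have hx : (e g).toAdd ≠ 0 := by simpa using hg1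
  simpa [coe_mem_padicLevel] using PadicInt.exists_pow_dvd_and_not_pow_succ_dvd hx

theorem padicLevel_le_of_mem {K : Subgroup G} (hK : IsClosed (K : Set G)) {m : ℕ} {g : G}
    (hgK : g ∈ K) (hg : g ∈ padicLevel e m) (hg' : g ∉ padicLevel e (m + 1)) :
    padicLevel e m ≤ K := by
  set A : AddSubgroup ℤ_[p] :=
    Subgroup.toAddSubgroup' (K.comap (Z.subtype.comp (e.symm : Multiplicative ℤ_[p] →* Z)))
  have hA : IsClosed (A : Set ℤ_[p]) :=
    hK.preimage (continuous_subtype_val.comp (e.symm.continuous.comp continuous_ofAdd))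
  lift g to Z using padicLevel_le m hg
  intro h hh
  lift h to Z using padicLevel_le m hh
  obtain ⟨a, ha⟩ := PadicInt.dvd_of_pow_dvd_of_not_pow_succ_dvd (coe_mem_padicLevel.1 hg)
    (mt coe_mem_padicLevel.2 hg') (coe_mem_padicLevel.1 hh)
  have := PadicInt.mul_mem_of_isClosed hA (x := (e g).toAdd) (by simpa [A] using hgK) a
  simpa [A, ← ha] using this

theorem isOpen_of_not_disjoint [IsTopologicalGroup G] (hZ : IsOpen (Z : Set G))
    (e : Z ≃ₜ* Multiplicative ℤ_[p]) {K : Subgroup G} (hK : IsClosed (K : Set G))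
    (hKZ : ¬Disjoint K Z) : IsOpen (K : Set G) := by
  obtain ⟨g, hgK, hgZ, hg1⟩ : ∃ g ∈ K, g ∈ Z ∧ g ≠ 1 := by
    simpa [Subgroup.disjoint_def] using hKZ
  obtain ⟨m, hm, hm'⟩ := exists_mem_padicLevel_notMem_succ_of_ne_one (e := e) hgZ hg1
  exact Subgroup.isOpen_mono (padicLevel_le_of_mem hK hgK hm hm') (isOpen_padicLevel hZ m)

end PadicLevel

section SolitarySubgroups

open Subgroup

variable {G : Type*} [Group G] [TopologicalSpace G] [IsTopologicalGroup G] [CompactSpace G]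
  {p : ℕ} [Fact p.Prime] {Z : Subgroup G} [Z.Normal]

theorem notMem_derivedPts_of_isOpen (hZ : IsOpen (Z : Set G)) (e : Z ≃ₜ* Multiplicative ℤ_[p])
    {H : SG G} (hH : IsOpen (H.1 : Set G)) : H ∉ derivedPts (SG G) := by
  obtain ⟨m, hm⟩ := exists_padicLevel_subset (e := e) (hH.mem_nhds H.1.one_mem)
  have := padicLevel_normal (e := e) (m + 1)
  refine SG.notMem_derivedPts_of_forall_sup_eq _ (isOpen_padicLevel (e := e) hZ (m + 1))
    fun K hK => ?_
  have hNH : padicLevel e (m + 1) ≤ H.1 := (padicLevel_antitone m.le_succ).trans hm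
  rw [sup_eq_left.2 hNH] at hK
  obtain ⟨g, hg, hg'⟩ := exists_mem_padicLevel_notMem_succ (e := e) m
  obtain ⟨k, hk, n, hn, rfl⟩ := mem_sup_of_normal_right.1 (hK ▸ hm hg : _ ∈ K.1 ⊔ _)
  have hkm : k ∈ padicLevel e m := by
    simpa using mul_mem hg (inv_mem (padicLevel_antitone m.le_succ hn))
  have hkm' : k ∉ padicLevel e (m + 1) := fun hk' => hg' (mul_mem hk' hn)
  have hmK := padicLevel_le_of_mem K.2 hk hkm hkm'
  refine Subtype.ext (le_antisymm (hK ▸ le_sup_left) ?_)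
  exact hK ▸ sup_le le_rfl ((padicLevel_antitone m.le_succ).trans hmK)

theorem mem_derivedPts_iff_disjoint (hZ : IsOpen (Z : Set G)) (e : Z ≃ₜ* Multiplicative ℤ_[p])
    {H : SG G} : H ∈ derivedPts (SG G) ↔ Disjoint H.1 Z := by
  refine ⟨fun hH => by_contra fun hHZ =>
    notMem_derivedPts_of_isOpen hZ e (isOpen_of_not_disjoint hZ e H.2 hHZ) hH, fun hHZ => ?_⟩
  refine SG.mem_derivedPts_of_forall_exists_sup_eq fun W hW => ?_
  obtain ⟨n, hn⟩ := exists_padicLevel_subset (e := e) hW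
  have hN := padicLevel_normal (e := e) n
  have hKo : IsOpen ((H.1 ⊔ padicLevel e n : Subgroup G) : Set G) :=
    isOpen_mono le_sup_right (isOpen_padicLevel hZ n)
  refine ⟨padicLevel e n, hN, hn, ⟨_, isClosed_of_isOpen _ hKo⟩, by simp, fun hKH => ?_⟩
  obtain ⟨g, hg, hg'⟩ := exists_mem_padicLevel_notMem_succ (e := e) n
  have hgH : g ∈ H.1 := congrArg Subtype.val hKH ▸ mem_sup_right hg
  rw [disjoint_def.1 hHZ hgH (padicLevel_le n hg)] at hg'
  exact hg' (one_mem _)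

theorem le_centralizer_of_solitary (hZ : IsOpen (Z : Set G)) (e : Z ≃ₜ* Multiplicative ℤ_[p])
    {H : SG G} (hH : Solitary H) : H.1 ≤ centralizer (Z : Set G) := by
  have := Function.Injective.isMulTorsionFree (e : Z →* Multiplicative ℤ_[p]) e.injective
  obtain ⟨W, hW, hWH⟩ := hH.exists_nhds_one_forall_sup_eq
  obtain ⟨n, hn⟩ := exists_padicLevel_subset (e := e) hW
  have := padicLevel_normal (e := e) n
  have hHZ := (mem_derivedPts_iff_disjoint hZ e).1 hH.1
  refine fun h hh => mem_centralizer_iff.2 fun z hz => ?_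
  have hz' := pow_mem_padicLevel (e := e) hz n
  let K : SG G := ⟨ConjAct.toConjAct (z ^ p ^ n) • H.1, by
    rw [coe_pointwise_smul]
    exact H.2.smul _⟩
  have hKH : K = H := hWH _ hn K ((mem_derivedPts_iff_disjoint hZ e).2
    (disjoint_conjAct_smul hHZ _)) (conjAct_smul_sup_eq hz' H.1)
  have hzh : z ^ p ^ n * h * (z ^ p ^ n)⁻¹ ∈ H.1 :=
    congrArg Subtype.val hKH ▸ (mem_smul_pointwise_iff_exists _ _ _).2 ⟨h, hh, rfl⟩
  have := commute_of_conj_mem hHZ hh (padicLevel_le n hz') hzh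
  exact (commute_of_commute_pow hz (pow_ne_zero n (Fact.out : p.Prime).ne_zero) this.symm).symm.eq

theorem solitary_of_le_centralizer (hZ : IsOpen (Z : Set G)) (e : Z ≃ₜ* Multiplicative ℤ_[p])
    {H : SG G} (hHd : H ∈ derivedPts (SG G)) (hHc : H.1 ≤ centralizer (Z : Set G)) :
    Solitary H := by
  have := Function.Injective.isMulTorsionFree (e : Z →* Multiplicative ℤ_[p]) e.injective
  have := finiteIndex_of_isOpen hZ
  refine SG.solitary_of_forall_sup_eq hHd Z hZ fun K hKd hK => Subtype.ext ?_
  exact eq_of_sup_eq_of_le_centralizer hHc ((mem_derivedPts_iff_disjoint hZ e).1 hHd)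
    ((mem_derivedPts_iff_disjoint hZ e).1 hKd) hK

theorem finite_setOf_solitary (hZ : IsOpen (Z : Set G)) (e : Z ≃ₜ* Multiplicative ℤ_[p]) :
    {K : SG G | Solitary K}.Finite := by
  have := Function.Injective.isMulTorsionFree (e : Z →* Multiplicative ℤ_[p]) e.injective
  have := finiteIndex_of_isOpen hZ
  have hsub : ∀ K : SG G, Solitary K →
      (K.1 : Set G) ⊆ {t | t ∈ centralizer (Z : Set G) ∧ t ^ Z.index = 1} := fun K hK k hk =>
    ⟨le_centralizer_of_solitary hZ e hK hk, disjoint_def.1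
      ((mem_derivedPts_iff_disjoint hZ e).1 hK.1) (pow_mem hk _) (Z.pow_index_mem k)⟩
  refine Set.Finite.of_finite_image (f := fun K : SG G => (K.1 : Set G)) ?_
    (SetLike.coe_injective.comp Subtype.val_injective).injOn
  exact finite_setOf_mem_centralizer_pow_index_eq_one.finite_subsets.subset
    (Set.image_subset_iff.2 hsub)

end SolitarySubgroups

theorem solitary_iff_centralizes_general {G : Type*} [Group G] [TopologicalSpace G]
    [IsTopologicalGroup G] [CompactSpace G]
    {p : ℕ} [Fact p.Prime] (Z : Subgroup G) (hZn : Z.Normal) (hZo : IsOpen (Z : Set G))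
    (hZ : ∃ e : Z ≃ₜ ℤ_[p], ∀ a b, e (a * b) = e a + e b)
    (H : SG G) (hHd : H ∈ derivedPts (SG G)) :
    (Solitary H ↔ H.1 ≤ Subgroup.centralizer (Z : Set G)) ∧
    {K : SG G | Solitary K}.Finite := by
  obtain ⟨e, he⟩ := hZ
  set e' := e.toContinuousMulEquivMultiplicative he
  exact ⟨⟨le_centralizer_of_solitary hZo e', solitary_of_le_centralizer hZo e' hHd⟩,
    finite_setOf_solitary hZo e'⟩

/-- Let `G` be a profinite group with an open normal subgroup `Z` topologically
isomorphic to `ℤ_p`, and let `H` be a non-isolated point of `S(G)`. Then `H` is solitary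
in `G` if and only if `H ≤ C_G(Z)`; moreover there are only finitely many solitary
subgroups of `G`. -/
theorem solitary_iff_centralizes {G : Type*} [Group G] [TopologicalSpace G]
    [IsTopologicalGroup G] [CompactSpace G] [T2Space G] [TotallyDisconnectedSpace G]
    {p : ℕ} [Fact p.Prime] (Z : Subgroup G) (hZn : Z.Normal) (hZo : IsOpen (Z : Set G))
    (hZ : ∃ e : Z ≃ₜ ℤ_[p], ∀ a b, e (a * b) = e a + e b)
    (H : SG G) (hHd : H ∈ derivedPts (SG G)) :
    (Solitary H ↔ H.1 ≤ Subgroup.centralizer (Z : Set G)) ∧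
    {K : SG G | Solitary K}.Finite :=
  solitary_iff_centralizes_general Z hZn hZo hZ H hHd
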